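/- For every real number λ > 1 there exists a real number s > 0 such that the sequence n ↦ ρ(M_{T_{1,n,n}}(s)) converges to λ as n → ∞. In particular, every real number greater than 1 is an s-deformed Laplacian limit point for some s > 0. -/

import Mathlib

open Filter Topology

/-- The deformed Laplacian matrix `M_G(s) = I - s·A + s²·(D - I)` of a finite simple graph. -/
noncomputable def defLap {V : Type*} [Fintype V] [DecidableEq V] (G : SimpleGraph V) (s : ℝ) :
    Matrix V V ℝ :=
  letI := Classical.decRel G.Adj
  (1 : Matrix V V ℝ) - s • (G.adjMatrix ℝ) +
    s ^ 2 • (Matrix.diagonal (fun v => (G.degree v : ℝ)) - 1)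

/-- The largest (real) eigenvalue of a matrix. -/
noncomputable def lamMax {V : Type*} [Fintype V] (M : Matrix V V ℝ) : ℝ :=
  sSup {μ : ℝ | ∃ v : V → ℝ, v ≠ 0 ∧ M.mulVec v = μ • v}

/-- The starlike tree `T_{1,n,n}`: vertex `0` is the center, vertex `1` is a pendant vertex,
vertices `2,…,n+1` and `n+2,…,2n+1` form two pendant paths on `n` vertices each. -/
def T1nn (n : ℕ) : SimpleGraph (Fin (2 * n + 2)) :=
  SimpleGraph.fromRel (fun i j =>
    ((i : ℕ) = 0 ∧ (j : ℕ) = 1) ∨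
    ((i : ℕ) = 0 ∧ (j : ℕ) = 2) ∨
    ((i : ℕ) = 0 ∧ (j : ℕ) = n + 2) ∨
    (2 ≤ (i : ℕ) ∧ (i : ℕ) < n + 1 ∧ (j : ℕ) = (i : ℕ) + 1) ∨
    (n + 2 ≤ (i : ℕ) ∧ (i : ℕ) < 2 * n + 1 ∧ (j : ℕ) = (i : ℕ) + 1))


/-!
Root `T_{1,n,n}` at its centre `0`. Then `xᵀ M x = (1 - s²) x₀² + ∑ (x_child - s x_parent)²`,
the sum running over the edges. If `(s, r)` solve the two equations of `T1nnParams`, the form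
`λ ‖x‖² - xᵀ M x` is a sum of one nonnegative square per edge plus `(s² + s r)` times the squares
of the coordinates at the two far ends of the long arms, so `ρ ≤ λ`. The vector that is `1` at the
centre, `-s / (λ - 1)` at the pendant vertex and `(-r) ^ k` at distance `k` along each long arm
kills every edge square, so its Rayleigh quotient is at least `λ - 2 (s² + s r) r^{2n}`.
As `0 < r < 1`, the two bounds squeeze `ρ` to `λ`.
-/

open Finset Matrix

section lamMax

variable {V : Type*} [Fintype V]

/-- `lamMax M = sSup ∅ = 0` when `M` has no real eigenvalue, whence `0 ≤ c`. -/
lemma lamMax_le_of_forall_dotProduct_mulVec_le (M : Matrix V V ℝ) {c : ℝ} (hc : 0 ≤ c)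
    (h : ∀ x : V → ℝ, x ⬝ᵥ M *ᵥ x ≤ c * (x ⬝ᵥ x)) : lamMax M ≤ c := by
  refine Real.sSup_le ?_ hc
  rintro μ ⟨v, hv, hμ⟩
  have hle := h v
  rw [hμ, dotProduct_smul, smul_eq_mul] at hle
  exact le_of_mul_le_mul_right hle (dotProduct_self_star_pos_iff.mpr hv)

variable [DecidableEq V]

lemma bddAbove_eigenvalues (M : Matrix V V ℝ) :
    BddAbove {μ : ℝ | ∃ v : V → ℝ, v ≠ 0 ∧ M *ᵥ v = μ • v} := by
  refine (Module.End.finite_hasEigenvalue (toLin' M)).bddAbove.mono ?_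
  rintro μ ⟨v, hv, hμ⟩
  exact Module.End.hasEigenvalue_of_hasEigenvector ⟨Module.End.mem_eigenspace_iff.mpr hμ, hv⟩

/-- The supremum of the Rayleigh quotient is an eigenvalue, hence at most `lamMax M`. -/
lemma dotProduct_mulVec_le_lamMax (M : Matrix V V ℝ) (hM : M.IsSymm) (w : V → ℝ) :
    w ⬝ᵥ M *ᵥ w ≤ lamMax M * (w ⬝ᵥ w) := by
  rcases eq_or_ne w 0 with rfl | hw
  · simp
  have hw' : WithLp.toLp 2 w ≠ 0 := by simpa using hw
  have : Nontrivial (EuclideanSpace ℝ V) := ⟨⟨_, 0, hw'⟩⟩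
  have hT : (toEuclideanLin M).IsSymmetric :=
    isSymmetric_toEuclideanLin_iff.mpr (isHermitian_iff_isSymm.mpr hM)
  let T := LinearMap.toContinuousLinearMap (toEuclideanLin M)
  set μ := ⨆ x : {x : EuclideanSpace ℝ V // x ≠ 0}, T.rayleighQuotient x
  obtain ⟨v, hv⟩ := hT.hasEigenvalue_iSup_of_finiteDimensional.exists_hasEigenvector
  have hMv : M *ᵥ WithLp.ofLp v = μ • WithLp.ofLp v := congrArg WithLp.ofLp hv.apply_eq_smul
  have hμ : μ ≤ lamMax M :=
    le_csSup (bddAbove_eigenvalues M) ⟨WithLp.ofLp v, by simpa using hv.2, hMv⟩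
  have hbdd : BddAbove (Set.range fun x : {x : EuclideanSpace ℝ V // x ≠ 0} ↦
      T.rayleighQuotient x) :=
    ⟨‖T‖, by rintro _ ⟨x, rfl⟩; exact (le_abs_self _).trans (T.rayleighQuotient_le_norm x)⟩
  have hrayleigh : T.rayleighQuotient (WithLp.toLp 2 w) = (w ⬝ᵥ M *ᵥ w) / (w ⬝ᵥ w) := by
    rw [ContinuousLinearMap.rayleighQuotient, ContinuousLinearMap.reApplyInnerSelf_apply,
      ← real_inner_self_eq_norm_sq]
    simp only [T, LinearMap.coe_toContinuousLinearMap', toLpLin_apply,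
      EuclideanSpace.inner_toLp_toLp, RCLike.re_to_real, star_trivial]
  have hpos : 0 < w ⬝ᵥ w := dotProduct_self_star_pos_iff.mpr hw
  have hle := (le_ciSup hbdd ⟨_, hw'⟩).trans hμ
  rwa [hrayleigh, div_le_iff₀ hpos] at hle

end lamMax

section defLap

variable {V : Type*} [Fintype V] [DecidableEq V]

lemma defLap_isSymm (G : SimpleGraph V) (s : ℝ) : (defLap G s).IsSymm := by
  classical
  exact (isSymm_one.sub (G.isSymm_adjMatrix.smul s)).add
    (((isSymm_diagonal _).sub isSymm_one).smul _)

lemma dotProduct_defLap_mulVec (G : SimpleGraph V) [DecidableRel G.Adj] (s : ℝ) (x : V → ℝ) :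
    x ⬝ᵥ defLap G s *ᵥ x = (1 - s ^ 2) * ∑ u, x u ^ 2 +
      ∑ u, ∑ v, if G.Adj u v then s ^ 2 * x u ^ 2 - s * (x u * x v) else 0 := by
  have hrow (u : V) : x u * (defLap G s *ᵥ x) u = (1 - s ^ 2) * x u ^ 2 +
      ∑ v, if G.Adj u v then s ^ 2 * x u ^ 2 - s * (x u * x v) else 0 := by
    obtain rfl : ‹DecidableRel G.Adj› = Classical.decRel G.Adj := Subsingleton.elim _ _
    simp only [defLap, add_mulVec, sub_mulVec, one_mulVec, smul_mulVec, Pi.add_apply,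
      Pi.sub_apply, Pi.smul_apply, SimpleGraph.adjMatrix_mulVec_apply, smul_eq_mul,
      mulVec_diagonal]
    rw [← sum_filter, ← SimpleGraph.neighborFinset_eq_filter, sum_sub_distrib, sum_const,
      SimpleGraph.card_neighborFinset_eq_degree, ← mul_sum, nsmul_eq_mul, ← mul_sum]
    ring
  simp only [dotProduct, hrow, sum_add_distrib, mul_sum]

lemma sum_ite_fromRel_adj {M : Type*} [AddCommMonoid M] (R : V → V → Prop) [DecidableRel R]
    (hR : ∀ a b, R a b → ¬ R b a) (g : V → V → M) :
    (∑ a, ∑ b, if (SimpleGraph.fromRel R).Adj a b then g a b else 0) =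
      ∑ a, ∑ b, if R a b then g a b + g b a else 0 := by
  have hsplit (a b : V) : (if (SimpleGraph.fromRel R).Adj a b then g a b else 0) =
      (if R a b then g a b else 0) + if R b a then g a b else 0 := by
    by_cases hab : R a b
    · have hba := hR a b hab
      have hne : a ≠ b := fun h => hba (h ▸ hab)
      simp [hab, hba, hne]
    · by_cases hba : R b a
      · have hne : a ≠ b := fun h => hab (h ▸ hba)
        simp [hab, hba, hne]
      · simp [hab, hba]
  simp only [hsplit, sum_add_distrib]
  rw [sum_comm (f := fun a b => if R b a then g a b else 0)]
  simp only [← sum_add_distrib, ← ite_add_zero]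

end defLap

lemma dotProduct_self_eq_sum_range (N : ℕ) (y : ℕ → ℝ) :
    (fun i : Fin N => y i) ⬝ᵥ (fun i => y i) = ∑ k ∈ range N, y k ^ 2 := by
  simp only [dotProduct, sq]
  exact Fin.sum_univ_eq_sum_range (fun k => y k * y k) N

namespace T1nn

def rel (n a b : ℕ) : Prop :=
  (a = 0 ∧ b = 1) ∨ (a = 0 ∧ b = 2) ∨ (a = 0 ∧ b = n + 2) ∨
    (2 ≤ a ∧ a < n + 1 ∧ b = a + 1) ∨ (n + 2 ≤ a ∧ a < 2 * n + 1 ∧ b = a + 1)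

instance (n : ℕ) : DecidableRel (rel n) := fun _ _ => by unfold rel; infer_instance

lemma eq_fromRel (n : ℕ) : T1nn n = SimpleGraph.fromRel fun i j : Fin (2 * n + 2) => rel n i j :=
  rfl

lemma rel_asymm {n a b : ℕ} (h : rel n a b) : ¬ rel n b a := by
  unfold rel at *; omega

/-- The vertex at distance `k` from the centre `0` on the arm with vertices `o + 1, o + 2, …`;
the two long arms of `T1nn n` have `o = 1` and `o = n + 1`. -/
def arm (o k : ℕ) : ℕ := if k = 0 then 0 else o + k

section arms

variable {n o k : ℕ}

lemma arm_zero (o : ℕ) : arm o 0 = 0 := if_pos rfl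

lemma arm_lt (ho : o = 1 ∨ o = n + 1) (hk : k ≤ n) : arm o k < 2 * n + 2 := by
  unfold arm; split_ifs <;> omega

lemma rel_arm_succ_iff (ho : o = 1 ∨ o = n + 1) (hk : k < n) (a : ℕ) :
    rel n a (arm o (k + 1)) ↔ a = arm o k := by
  rw [arm, if_neg k.succ_ne_zero, arm, rel]; split_ifs <;> omega

lemma rel_one_iff (a : ℕ) : rel n a 1 ↔ a = 0 := by
  unfold rel; omega

lemma not_rel_zero (a : ℕ) : ¬ rel n a 0 := by
  unfold rel; omega

end arms

lemma sum_range_eq {M : Type*} [AddCommMonoid M] (n : ℕ) (f : ℕ → M) :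
    ∑ b ∈ range (2 * n + 2), f b =
      f 0 + f 1 + ∑ k ∈ range n, f (arm 1 (k + 1)) + ∑ k ∈ range n, f (arm (n + 1) (k + 1)) := by
  simp only [arm, Nat.add_one_ne_zero, if_false]
  rw [show 2 * n + 2 = n + 2 + n by ring, sum_range_add, sum_range_succ', sum_range_succ']
  simp only [zero_add, show ∀ x, 1 + (x + 1) = x + 1 + 1 by omega,
    show ∀ x, n + 1 + (x + 1) = n + 2 + x by omega]
  abel

lemma sum_ite_rel {M : Type*} [AddCommMonoid M] (n : ℕ) (h : ℕ → ℕ → M) :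
    ∑ a : Fin (2 * n + 2), ∑ b : Fin (2 * n + 2), (if rel n a b then h a b else 0) =
      h 0 1 + ∑ k ∈ range n, h (arm 1 k) (arm 1 (k + 1)) +
        ∑ k ∈ range n, h (arm (n + 1) k) (arm (n + 1) (k + 1)) := by
  have harm (o : ℕ) (ho : o = 1 ∨ o = n + 1) (k : ℕ) (hk : k ∈ range n) :
      ∑ a ∈ range (2 * n + 2), (if rel n a (arm o (k + 1)) then h a (arm o (k + 1)) else 0) =
        h (arm o k) (arm o (k + 1)) := by
    have hk := mem_range.mp hk
    simp_rw [rel_arm_succ_iff ho hk, sum_ite_eq', mem_range, arm_lt ho hk.le, if_true]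
  rw [Fin.sum_univ_eq_sum_range (fun a => ∑ b : Fin _, if rel n a b then h a b else 0),
    sum_congr rfl fun a _ => Fin.sum_univ_eq_sum_range (fun b => if rel n a b then h a b else 0) _,
    sum_comm, sum_range_eq, sum_congr rfl (harm 1 (.inl rfl)),
    sum_congr rfl (harm (n + 1) (.inr rfl))]
  simp [not_rel_zero, rel_one_iff]

lemma dotProduct_defLap_mulVec (n : ℕ) (s : ℝ) (y : ℕ → ℝ) :
    (fun i : Fin (2 * n + 2) => y i) ⬝ᵥ defLap (T1nn n) s *ᵥ (fun i => y i) =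
      (1 - s ^ 2) * y 0 ^ 2 + (y 1 - s * y 0) ^ 2 +
        ∑ k ∈ range n, (y (arm 1 (k + 1)) - s * y (arm 1 k)) ^ 2 +
        ∑ k ∈ range n, (y (arm (n + 1) (k + 1)) - s * y (arm (n + 1) k)) ^ 2 := by
  rw [eq_fromRel, _root_.dotProduct_defLap_mulVec,
    sum_ite_fromRel_adj (fun i j : Fin (2 * n + 2) => rel n i j) fun _ _ => rel_asymm,
    ← sum_range (fun k => y k ^ 2),
    sum_ite_rel n fun a b =>
      s ^ 2 * y a ^ 2 - s * (y a * y b) + (s ^ 2 * y b ^ 2 - s * (y b * y a)),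
    sum_range_eq]
  have harm (o : ℕ) : (1 - s ^ 2) * ∑ k ∈ range n, y (arm o (k + 1)) ^ 2 +
      ∑ k ∈ range n, (s ^ 2 * y (arm o k) ^ 2 - s * (y (arm o k) * y (arm o (k + 1))) +
        (s ^ 2 * y (arm o (k + 1)) ^ 2 - s * (y (arm o (k + 1)) * y (arm o k)))) =
      ∑ k ∈ range n, (y (arm o (k + 1)) - s * y (arm o k)) ^ 2 := by
    rw [mul_sum, ← sum_add_distrib]
    exact sum_congr rfl fun k _ => by ring
  linear_combination harm 1 + harm (n + 1)

noncomputable def approxEigenvector (lam s r : ℝ) (n b : ℕ) : ℝ :=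
  if b = 0 then 1 else if b = 1 then -(s / (lam - 1))
  else if b ≤ n + 1 then (-r) ^ (b - 1) else (-r) ^ (b - (n + 1))

lemma approxEigenvector_arm {lam s r : ℝ} {n o k : ℕ} (ho : o = 1 ∨ o = n + 1) (hk : k ≤ n) :
    approxEigenvector lam s r n (arm o k) = (-r) ^ k := by
  obtain rfl | hk0 := eq_or_ne k 0
  · simp [arm, approxEigenvector]
  rw [arm, if_neg hk0, approxEigenvector]
  rcases ho with rfl | rfl <;> split_ifs <;> first | omega | (congr 1; omega)

end T1nn

open T1nn

lemma exists_sq_eq_mul_one_sub {lam : ℝ} (hlam : 0 < lam) :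
    ∃ c, 0 < c ∧ c < 1 ∧ c ^ 2 = lam * (1 - c) := by
  set d := √(lam ^ 2 + 4 * lam)
  have hd : d ^ 2 = lam ^ 2 + 4 * lam := Real.sq_sqrt (by positivity)
  have hd0 : 0 ≤ d := Real.sqrt_nonneg _
  refine ⟨(d - lam) / 2, ?_, ?_, by linear_combination hd / 4⟩
  · nlinarith
  · nlinarith

lemma path_certificate {lam s r : ℝ} (hr : r ≠ 0) (h : lam - 1 = s ^ 2 + s * r + s / r)
    (z : ℕ → ℝ) (n : ℕ) :
    lam * ∑ k ∈ range n, z (k + 1) ^ 2 - ∑ k ∈ range n, (z (k + 1) - s * z k) ^ 2 =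
      (s ^ 2 + s * r) * (z n ^ 2 - z 0 ^ 2) + ∑ k ∈ range n, s / r * (z (k + 1) + r * z k) ^ 2 := by
  rw [← sum_range_sub (fun k => z k ^ 2), mul_sum, mul_sum, ← sum_sub_distrib, ← sum_add_distrib]
  refine sum_congr rfl fun k _ => ?_
  have hs : s / r * r = s := div_mul_cancel₀ s hr
  linear_combination (z (k + 1) ^ 2) * h - (z (k + 1) * z k * 2 + z k ^ 2 * r) * hs

/-- `arm_eq` is the eigenvalue equation `M y = λ y` at an inner vertex of a long arm for
`y = (-r) ^ k`, and `root_eq` is the one at the centre after eliminating the pendant vertex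
through `y₁ = -s / (λ - 1) · y₀`. -/
structure T1nnParams (lam s r : ℝ) : Prop where
  one_lt : 1 < lam
  s_pos : 0 < s
  r_pos : 0 < r
  r_lt_one : r < 1
  arm_eq : lam - 1 = s ^ 2 + s * r + s / r
  root_eq : (lam - 1) * (lam - 1 - 2 * (s ^ 2 + s * r)) = s ^ 2

namespace T1nnParams

/-- Given `s r = (λ - 1)(1 - c)` and `r² = 1 - c²`, so that `s / r = (λ - 1) / (1 + c)`, both
equations of `T1nnParams` reduce to `c² = λ (1 - c)`. -/
lemma of_sq_eq {lam s r c : ℝ} (hlam : 1 < lam) (hc0 : 0 < c) (hc1 : c < 1)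
    (hc : c ^ 2 = lam * (1 - c)) (hr : 0 < r) (hr2 : r ^ 2 = 1 - c ^ 2)
    (hsr : s * r = (lam - 1) * (1 - c)) : T1nnParams lam s r := by
  have hs : 0 < s := pos_of_mul_pos_left (hsr ▸ mul_pos (by linarith) (by linarith)) hr.le
  have hsdr : s / r * (1 + c) = lam - 1 := by
    rw [div_mul_eq_mul_div, div_eq_iff hr.ne']
    refine mul_right_cancel₀ hr.ne' ?_
    linear_combination (1 + c) * hsr - (lam - 1) * hr2
  have hs2 : s ^ 2 = s * r * (s / r) := by field_simp
  have hc' : 1 + c ≠ 0 := by linarith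
  refine ⟨hlam, hs, hr, by nlinarith, mul_right_cancel₀ hc' ?_, mul_right_cancel₀ hc' ?_⟩
  · linear_combination -(1 + c) * hs2 - (s * r + 1) * hsdr - (lam + c) * hsr + (lam - 1) * hc
  · linear_combination (-(2 * lam - 1) * (1 + c)) * hs2 + (-(2 * lam - 1) * (s * r)) * hsdr +
      (-(lam - 1) * (2 * lam + 1 + 2 * c)) * hsr + (2 * (lam - 1) ^ 2) * hc

lemma exists_of_one_lt {lam : ℝ} (hlam : 1 < lam) : ∃ s r, T1nnParams lam s r := by
  obtain ⟨c, hc0, hc1, hc⟩ := exists_sq_eq_mul_one_sub (zero_lt_one.trans hlam)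
  have hr : 0 < √(1 - c ^ 2) := Real.sqrt_pos.mpr (by nlinarith)
  exact ⟨_, _, of_sq_eq hlam hc0 hc1 hc hr (Real.sq_sqrt (by nlinarith)) (div_mul_cancel₀ _ hr.ne')⟩

variable {lam s r : ℝ} (hp : T1nnParams lam s r) (n : ℕ)
include hp

lemma certificate (y : ℕ → ℝ) :
    let x := fun i : Fin (2 * n + 2) => y i
    lam * (x ⬝ᵥ x) - x ⬝ᵥ defLap (T1nn n) s *ᵥ x =
      (lam - 1) * (y 1 + s / (lam - 1) * y 0) ^ 2 +
        (s ^ 2 + s * r) * (y (arm 1 n) ^ 2 + y (arm (n + 1) n) ^ 2) +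
        ∑ k ∈ range n, s / r * (y (arm 1 (k + 1)) + r * y (arm 1 k)) ^ 2 +
        ∑ k ∈ range n, s / r * (y (arm (n + 1) (k + 1)) + r * y (arm (n + 1) k)) ^ 2 := by
  intro x
  have harm (o : ℕ) := path_certificate hp.r_pos.ne' hp.arm_eq (fun k => y (arm o k)) n
  simp only [arm_zero] at harm
  have hroot : lam * (y 0 ^ 2 + y 1 ^ 2) - ((1 - s ^ 2) * y 0 ^ 2 + (y 1 - s * y 0) ^ 2) -
      2 * (s ^ 2 + s * r) * y 0 ^ 2 = (lam - 1) * (y 1 + s / (lam - 1) * y 0) ^ 2 := by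
    have := (sub_pos.mpr hp.one_lt).ne'
    field_simp
    linear_combination (y 0 ^ 2) * hp.root_eq
  rw [T1nn.dotProduct_defLap_mulVec, dotProduct_self_eq_sum_range, sum_range_eq]
  linear_combination hroot + harm 1 + harm (n + 1)

lemma lamMax_defLap_le : lamMax (defLap (T1nn n) s) ≤ lam := by
  refine lamMax_le_of_forall_dotProduct_mulVec_le _ (zero_le_one.trans hp.one_lt.le) fun x => ?_
  obtain ⟨y, rfl⟩ : ∃ y : ℕ → ℝ, (fun i : Fin (2 * n + 2) => y i) = x :=
    ⟨fun k => if h : k < 2 * n + 2 then x ⟨k, h⟩ else 0, funext fun i => dif_pos i.isLt⟩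
  have hw : 0 ≤ s / r := (div_pos hp.s_pos hp.r_pos).le
  have hsos (o : ℕ) : 0 ≤ ∑ k ∈ range n, s / r * (y (arm o (k + 1)) + r * y (arm o k)) ^ 2 :=
    sum_nonneg fun _ _ => mul_nonneg hw (sq_nonneg _)
  have hroot : 0 ≤ (lam - 1) * (y 1 + s / (lam - 1) * y 0) ^ 2 :=
    mul_nonneg (sub_nonneg.mpr hp.one_lt.le) (sq_nonneg _)
  have hends : 0 ≤ (s ^ 2 + s * r) * (y (arm 1 n) ^ 2 + y (arm (n + 1) n) ^ 2) :=
    mul_nonneg (by nlinarith [hp.s_pos, hp.r_pos]) (by positivity)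
  linarith [hp.certificate n y, hsos 1, hsos (n + 1)]

lemma le_lamMax_defLap : lam - 2 * (s ^ 2 + s * r) * (r ^ 2) ^ n ≤ lamMax (defLap (T1nn n) s) := by
  set y := approxEigenvector lam s r n
  set x := fun i : Fin (2 * n + 2) => y i
  have hy {o k : ℕ} (ho : o = 1 ∨ o = n + 1) (hk : k ≤ n) : y (arm o k) = (-r) ^ k :=
    approxEigenvector_arm ho hk
  have hsos (o : ℕ) (ho : o = 1 ∨ o = n + 1) :
      ∑ k ∈ range n, s / r * (y (arm o (k + 1)) + r * y (arm o k)) ^ 2 = 0 :=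
    sum_eq_zero fun k hk => by
      rw [hy (k := k + 1) ho (mem_range.mp hk), hy ho (mem_range.mp hk).le, pow_succ]
      ring
  have hroot : y 1 + s / (lam - 1) * y 0 = 0 := by simp [y, approxEigenvector]
  have hcert : lam * (x ⬝ᵥ x) - x ⬝ᵥ defLap (T1nn n) s *ᵥ x = _ := hp.certificate n y
  rw [hroot, hsos 1 (.inl rfl), hsos (n + 1) (.inr rfl), hy (.inl rfl) le_rfl,
    hy (.inr rfl) le_rfl, ← pow_mul, mul_comm n 2, pow_mul, neg_sq] at hcert
  have hxx : 1 ≤ x ⬝ᵥ x := by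
    rw [dotProduct_self_eq_sum_range]
    have := single_le_sum (fun k _ => sq_nonneg (y k)) (mem_range.mpr (by omega : 0 < 2 * n + 2))
    simpa [y, approxEigenvector] using this
  have hmax := dotProduct_mulVec_le_lamMax _ (defLap_isSymm (T1nn n) s) x
  have hq : 0 ≤ (s ^ 2 + s * r) * (r ^ 2) ^ n :=
    mul_nonneg (by nlinarith [hp.s_pos, hp.r_pos]) (pow_nonneg (sq_nonneg r) n)
  nlinarith [mul_nonneg hq (sub_nonneg.mpr hxx)]

end T1nnParams

theorem stmt0 (lam : ℝ) (hlam : 1 < lam) :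
    ∃ s : ℝ, 0 < s ∧
      Filter.Tendsto (fun n : ℕ => lamMax (defLap (T1nn n) s)) Filter.atTop (nhds lam) := by
  obtain ⟨s, r, hp⟩ := T1nnParams.exists_of_one_lt hlam
  refine ⟨s, hp.s_pos, tendsto_of_tendsto_of_tendsto_of_le_of_le ?_ tendsto_const_nhds
    hp.le_lamMax_defLap hp.lamMax_defLap_le⟩
  have hr2 : r ^ 2 < 1 := by nlinarith [hp.r_pos, hp.r_lt_one]
  simpa using ((tendsto_pow_atTop_nhds_zero_of_lt_one (sq_nonneg r) hr2).const_mul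
    (2 * (s ^ 2 + s * r))).const_sub lam
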